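/- arXiv:2203.16128 — 3 statements merged into one kernel-verified Lean document; each statement's English description precedes it below -/
import Mathlib

section
/- (Lemma 1, monotonicity of roots within a group) Fix an integer r ≥ 1, an integer i ≥ 0, and an integer j with 1 ≤ j ≤ r. Let y_{1,n} > y_{2,n} > … > y_{i+1,n} denote the roots of Z_n arranged in decreasing order for n = (r+1)i+j and n = (r+1)i+j+1 (each of these polynomials has exactly i+1 distinct negative real roots). Then for every m with 1 ≤ m ≤ i+1, one has y_{m,(r+1)i+j+1} > y_{m,(r+1)i+j}. -/
open Polynomial

/-- The partition function of the 1d classical Rydberg blockade chain with `n` sites and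
blockade radius `r`:  `Z_n(y) = Σ_{m=0}^{⌊(n+r)/(r+1)⌋} C(n - r(m-1), m) y^m`. -/
noncomputable def Z (r n : ℕ) : Polynomial ℝ :=
  ∑ m ∈ Finset.range ((n + r) / (r + 1) + 1),
    Polynomial.C ((Nat.choose (n - r * (m - 1)) m : ℝ)) * Polynomial.X ^ m

/-!
The recurrence `Z_{n+1} = Z_n + y Z_{n-r}` drives a strong induction on `n`: `Z_n` has
`deg Z_n` distinct negative roots, and the roots of `Z_{n-r}` interlace them. Granting this at
`n`, the value `Z_{n+1}(y_k) = y_k Z_{n-r}(y_k)` at the `k`-th root of `Z_n` has sign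
`(-1)^(k+1)`, while `Z_{n+1}(0) = 1` and `Z_{n+1}` has sign `(-1)^(deg Z_{n+1})` near `-∞`.
The intermediate value theorem then puts one root of `Z_{n+1}` in each gap, so the roots of
`Z_n` and `Z_{n+1}` interlace; in particular the `k`-th root increases with `n`, which is the
theorem. To carry the induction on: the `k`-th root of `Z_{n+1-r}` lies below the `k`-th root of
`Z_{n+1}` by this monotonicity applied `r` times. It also lies above the `(k+1)`-st root `t` of
`Z_{n+1}`: the recurrence gives the sign of `Z_{n-r}(t)`, which places `t` below the `k`-th root
of `Z_{n-r}`, itself below the `k`-th root of `Z_{n+1-r}`.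
-/

open Finset

theorem choose_sub_mul_pos_iff (r n m : ℕ) :
    0 < (n - r * (m - 1)).choose m ↔ m ≤ (n + r) / (r + 1) := by
  rw [Nat.pos_iff_ne_zero, Ne, Nat.choose_eq_zero_iff, not_lt,
    Nat.le_div_iff_mul_le (by positivity)]
  rcases m with _ | s
  · simp
  · have : (s + 1) * (r + 1) = r * s + s + r + 1 := by ring
    simp only [Nat.add_sub_cancel]
    omega

theorem choose_succ_sub_mul (r n m : ℕ) :
    (n + 1 - r * m).choose (m + 1) = (n - r * m).choose (m + 1) + (n - r * m).choose m := by
  rcases le_or_gt (r * m) n with h | h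
  · rw [Nat.sub_add_comm h, Nat.choose_succ_succ', add_comm]
  · have hm : 0 < m := Nat.pos_of_ne_zero (by rintro rfl; simp at h)
    rw [show n + 1 - r * m = 0 by omega, show n - r * m = 0 by omega]
    simp [Nat.choose_eq_zero_of_lt, hm]

theorem Z_coeff (r n m : ℕ) : (Z r n).coeff m = (n - r * (m - 1)).choose m := by
  simp only [Z, finsetSum_coeff, coeff_C_mul_X_pow, Finset.sum_ite_eq, mem_range]
  split_ifs with hm
  · rfl
  · rw [eq_comm, Nat.cast_eq_zero]
    exact Nat.eq_zero_of_not_pos ((choose_sub_mul_pos_iff r n m).not.mpr (by omega))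

theorem natDegree_Z (r n : ℕ) : (Z r n).natDegree = (n + r) / (r + 1) := by
  apply natDegree_eq_of_le_of_coeff_ne_zero
  · refine natDegree_le_iff_coeff_eq_zero.mpr fun m hm => ?_
    rw [Z_coeff, Nat.cast_eq_zero]
    exact Nat.eq_zero_of_not_pos ((choose_sub_mul_pos_iff r n m).not.mpr (by omega))
  · rw [Z_coeff]
    exact_mod_cast ((choose_sub_mul_pos_iff r n _).mpr le_rfl).ne'

theorem leadingCoeff_Z_pos (r n : ℕ) : 0 < (Z r n).leadingCoeff := by
  rw [leadingCoeff, natDegree_Z, Z_coeff]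
  exact_mod_cast (choose_sub_mul_pos_iff r n _).mpr le_rfl

theorem Z_ne_zero (r n : ℕ) : Z r n ≠ 0 :=
  leadingCoeff_ne_zero.mp (leadingCoeff_Z_pos r n).ne'

theorem eval_Z_pos (r n : ℕ) {t : ℝ} (ht : 0 ≤ t) : 0 < (Z r n).eval t := by
  rw [eval_eq_sum_range]
  refine sum_pos' (fun m _ => ?_) ⟨0, by simp, by simp [Z_coeff]⟩
  rw [Z_coeff]
  positivity

theorem Z_isRoot_neg {r n : ℕ} {t : ℝ} (ht : (Z r n).IsRoot t) : t < 0 :=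
  not_le.mp fun h => (eval_Z_pos r n h).ne' ht

theorem Z_succ (r n : ℕ) : Z r (n + 1) = Z r n + X * Z r (n - r) := by
  ext (_ | m)
  · simp [Z_coeff]
  · have hshift : (n - r - r * (m - 1)).choose m = (n - r * m).choose m := by
      rcases m with _ | s
      · simp
      · rw [Nat.add_sub_cancel, Nat.sub_sub, mul_add_one, add_comm r]
    rw [coeff_add, coeff_X_mul, Z_coeff, Z_coeff, Z_coeff, Nat.add_sub_cancel, hshift,
      choose_succ_sub_mul]
    push_cast
    rfl

theorem natDegree_Z_le_succ (r n : ℕ) : (Z r n).natDegree ≤ (Z r (n + 1)).natDegree := by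
  simp only [natDegree_Z]
  exact Nat.div_le_div_right (by omega)

theorem natDegree_Z_succ_le (r n : ℕ) : (Z r (n + 1)).natDegree ≤ (Z r n).natDegree + 1 := by
  simp only [natDegree_Z]
  rw [← Nat.add_div_right _ r.succ_pos]
  exact Nat.div_le_div_right (by omega)

theorem natDegree_Z_succ_le_sub (r n : ℕ) :
    (Z r (n + 1)).natDegree ≤ (Z r (n - r)).natDegree + 1 := by
  simp only [natDegree_Z]
  rw [← Nat.add_div_right _ r.succ_pos]
  exact Nat.div_le_div_right (by omega)

theorem natDegree_Z_zero (r : ℕ) : (Z r 0).natDegree = 0 := by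
  rw [natDegree_Z]
  exact Nat.div_eq_of_lt (by omega)

theorem natDegree_Z_group (r i s : ℕ) (hs₁ : 1 ≤ s) (hs₂ : s ≤ r + 1) :
    (Z r ((r + 1) * i + s)).natDegree = i + 1 := by
  rw [natDegree_Z, add_assoc, add_comm, Nat.add_mul_div_left _ _ (by positivity),
    Nat.div_eq_of_lt_le (k := 1) (by omega) (by omega), add_comm]

theorem natDegree_Z_le_sub_add (r n : ℕ) :
    (Z r n).natDegree ≤ (Z r (n - r)).natDegree + 1 :=
  (natDegree_Z_le_succ r n).trans (natDegree_Z_succ_le_sub r n)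

/-- `x 0 > x 1 > ⋯` are `p.natDegree` distinct roots of `p`; hence they are all its roots and
`p` splits with simple roots. -/
structure IsSortedRoots (p : ℝ[X]) (x : ℕ → ℝ) : Prop where
  ne_zero : p ≠ 0
  strictAntiOn : StrictAntiOn x (Set.Iio p.natDegree)
  isRoot : ∀ k < p.natDegree, p.IsRoot (x k)

namespace IsSortedRoots

variable {p : ℝ[X]} {x y : ℕ → ℝ}

theorem injOn_range (h : IsSortedRoots p x) : Set.InjOn x (range p.natDegree) := by
  simpa only [coe_range] using h.strictAntiOn.injOn

theorem image_range_eq (h : IsSortedRoots p x) :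
    (range p.natDegree).image x = p.roots.toFinset := by
  refine eq_of_subset_of_card_le (fun t ht => ?_) ?_
  · obtain ⟨k, hk, rfl⟩ := mem_image.mp ht
    rw [Multiset.mem_toFinset, mem_roots h.ne_zero]
    exact h.isRoot k (mem_range.mp hk)
  · rw [card_image_of_injOn h.injOn_range, card_range]
    exact (Multiset.toFinset_card_le _).trans (card_roots' p)

theorem exists_eq_of_isRoot (h : IsSortedRoots p x) {t : ℝ} (ht : p.IsRoot t) :
    ∃ k < p.natDegree, x k = t := by
  have : t ∈ (range p.natDegree).image x := by
    rw [h.image_range_eq, Multiset.mem_toFinset, mem_roots h.ne_zero]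
    exact ht
  simpa using this

theorem roots_eq (h : IsSortedRoots p x) : p.roots = (range p.natDegree).val.map x := by
  have hcard : p.roots.toFinset.card = p.natDegree := by
    rw [← h.image_range_eq, card_image_of_injOn h.injOn_range, card_range]
  have hnodup : p.roots.Nodup := Multiset.toFinset_card_eq_card_iff_nodup.mp
    (le_antisymm (Multiset.toFinset_card_le _) (hcard ▸ card_roots' p))
  rw [← Multiset.dedup_eq_self.mpr hnodup, ← Multiset.toFinset_val, ← h.image_range_eq,
    image_val_of_injOn h.injOn_range]

theorem eval_eq (h : IsSortedRoots p x) (t : ℝ) :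
    p.eval t = p.leadingCoeff * ∏ k ∈ range p.natDegree, (t - x k) := by
  have hcard : Multiset.card p.roots = p.natDegree := by simp [h.roots_eq]
  conv_lhs => rw [← C_leadingCoeff_mul_prod_multiset_X_sub_C hcard]
  simp [h.roots_eq, eval_multiset_prod, prod_eq_multiset_prod]

theorem sign_eval (h : IsSortedRoots p x) (hp : 0 < p.leadingCoeff) {t : ℝ} {K : ℕ}
    (hK : K ≤ p.natDegree) (hgt : ∀ k < K, t < x k)
    (hlt : ∀ k, K ≤ k → k < p.natDegree → x k < t) :
    0 < (-1) ^ K * p.eval t := by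
  have habove : 0 < ∏ k ∈ range K, (x k - t) :=
    prod_pos fun k hk => sub_pos.mpr (hgt k (mem_range.mp hk))
  have hbelow : 0 < ∏ k ∈ Ico K p.natDegree, (t - x k) :=
    prod_pos fun k hk => sub_pos.mpr (hlt k (mem_Ico.mp hk).1 (mem_Ico.mp hk).2)
  have hflip : ∏ k ∈ range K, (x k - t) = (-1) ^ K * ∏ k ∈ range K, (t - x k) := by
    simpa only [neg_sub, card_range] using prod_neg (s := range K) fun k => t - x k
  rw [h.eval_eq, ← prod_range_mul_prod_Ico _ hK]
  calc (0 : ℝ) < p.leadingCoeff * (∏ k ∈ range K, (x k - t)) *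
        ∏ k ∈ Ico K p.natDegree, (t - x k) := mul_pos (mul_pos hp habove) hbelow
    _ = _ := by rw [hflip]; ring

theorem lt_of_sign_eval (h : IsSortedRoots p x) (hp : 0 < p.leadingCoeff) {t : ℝ} {k : ℕ}
    (hk : k < p.natDegree) (hgt : ∀ l < k, t < x l) (hsign : 0 < (-1) ^ (k + 1) * p.eval t) :
    t < x k := by
  by_contra! hle
  have hne : x k ≠ t := by
    rintro rfl
    simp [(h.isRoot k hk).eq_zero] at hsign
  have := h.sign_eval hp hk.le hgt fun l hkl hl =>
    (h.strictAntiOn.antitoneOn hk hl hkl).trans_lt (hle.lt_of_ne hne)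
  rw [pow_succ] at hsign
  linarith

theorem range_eq (h : IsSortedRoots p x) :
    Set.range (fun k : Fin p.natDegree => x k) = {t | p.IsRoot t} := by
  ext t
  constructor
  · rintro ⟨k, rfl⟩
    exact h.isRoot k k.2
  · intro ht
    obtain ⟨k, hk, rfl⟩ := h.exists_eq_of_isRoot ht
    exact ⟨⟨k, hk⟩, rfl⟩

theorem eqOn (hx : IsSortedRoots p x) (hy : IsSortedRoots p y) :
    Set.EqOn x y (Set.Iio p.natDegree) := by
  have hanti : ∀ {z : ℕ → ℝ}, IsSortedRoots p z →
      StrictAnti fun k : Fin p.natDegree => z k :=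
    fun hz _ _ hkl => hz.strictAntiOn (Fin.is_lt _) (Fin.is_lt _) hkl
  have := ((hanti hx).range_inj (hanti hy)).mp (hx.range_eq.trans hy.range_eq.symm)
  exact fun k hk => congrFun this ⟨k, hk⟩

end IsSortedRoots

theorem isSortedRoots_of_fin {p : ℝ[X]} {d : ℕ} (hp : p ≠ 0) (hd : p.natDegree = d)
    {y : Fin d → ℝ} (hy : StrictAnti y) (hroot : ∀ k, p.IsRoot (y k)) :
    IsSortedRoots p fun k => if h : k < d then y ⟨k, h⟩ else 0 := by
  subst hd
  refine ⟨hp, fun k hk l hl hkl => ?_, fun k hk => ?_⟩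
  · simp only [dif_pos (Set.mem_Iio.mp hk), dif_pos (Set.mem_Iio.mp hl)]
    exact hy (Fin.mk_lt_mk.mpr hkl)
  · simp only [dif_pos hk]
    exact hroot _

/-- `y 0 > x 0 > y 1 > x 1 > ⋯`, where `x` has `d` terms and `y` has `e`. -/
structure Interlaces (x : ℕ → ℝ) (d : ℕ) (y : ℕ → ℝ) (e : ℕ) : Prop where
  lt : ∀ k < d, x k < y k
  succ_lt : ∀ k, k + 1 < e → y (k + 1) < x k

namespace Interlaces

variable {x y : ℕ → ℝ} {d e k l : ℕ}

theorem lt_of_lt (h : Interlaces x d y e) (hx : StrictAntiOn x (Set.Iio d)) (he : e ≤ d + 1)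
    (hlk : l < k) (hk : k < e) : y k < x l := by
  obtain ⟨k, rfl⟩ := Nat.exists_eq_add_of_lt hlk
  exact (h.succ_lt (l + k) (by omega)).trans_le
    (hx.antitoneOn (by simp only [Set.mem_Iio]; omega) (by simp only [Set.mem_Iio]; omega)
      (by omega))

theorem gt_of_le (h : Interlaces x d y e) (hx : StrictAntiOn x (Set.Iio d)) (hkl : k ≤ l)
    (hl : l < d) : x l < y k :=
  (hx.antitoneOn (hkl.trans_lt hl) hl hkl).trans_lt (h.lt k (hkl.trans_lt hl))

end Interlaces

theorem IsSortedRoots.sign_eval_of_interlaces {p : ℝ[X]} {x y : ℕ → ℝ} {e k : ℕ}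
    (hx : IsSortedRoots p x) (hp : 0 < p.leadingCoeff) (h : Interlaces x p.natDegree y e)
    (he : e ≤ p.natDegree + 1) (hk : k < e) : 0 < (-1) ^ k * p.eval (y k) :=
  hx.sign_eval hp (by omega) (fun _ hl => h.lt_of_lt hx.strictAntiOn he hl hk)
    fun _ hkl hl => h.gt_of_le hx.strictAntiOn hkl hl

def RootsInterlace (p q : ℝ[X]) : Prop :=
  ∀ x y, IsSortedRoots p x → IsSortedRoots q y → Interlaces x p.natDegree y q.natDegree

theorem RootsInterlace.of_interlaces {p q : ℝ[X]} {x y : ℕ → ℝ} (hx : IsSortedRoots p x)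
    (hy : IsSortedRoots q y) (hpq : p.natDegree ≤ q.natDegree)
    (hqp : q.natDegree ≤ p.natDegree + 1)
    (h : Interlaces x p.natDegree y q.natDegree) : RootsInterlace p q := by
  intro x' y' hx' hy'
  have ex := hx.eqOn hx'
  have ey := hy.eqOn hy'
  refine ⟨fun k hk => ?_, fun k hk => ?_⟩
  · rw [← ex hk, ← ey (hk.trans_le hpq)]
    exact h.lt k hk
  · rw [← ex (show k < p.natDegree by omega), ← ey hk]
    exact h.succ_lt k hk

theorem lt_of_rootsInterlace_succ {f : ℕ → ℝ[X]} {a b : ℕ}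
    (hdeg : ∀ m, (f m).natDegree ≤ (f (m + 1)).natDegree)
    (hroots : ∀ m < b, ∃ x, IsSortedRoots (f m) x)
    (hI : ∀ m < b, RootsInterlace (f m) (f (m + 1))) (hab : a < b) {x y : ℕ → ℝ}
    (hx : IsSortedRoots (f a) x) (hy : IsSortedRoots (f b) y) {k : ℕ}
    (hk : k < (f a).natDegree) : x k < y k := by
  induction b, hab using Nat.le_induction generalizing y with
  | base => exact (hI a (lt_add_one a) x y hx hy).lt k hk
  | succ b hab ih =>
    obtain ⟨w, hw⟩ := hroots b (lt_add_one b)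
    have hkb : k < (f b).natDegree := hk.trans_le (monotone_nat_of_le_succ hdeg (by omega))
    exact (ih (fun m hm => hroots m (by omega)) (fun m hm => hI m (by omega)) hw).trans
      ((hI b (lt_add_one b) w y hw hy).lt k hkb)

theorem exists_isRoot_mem_Ioo {q : ℝ[X]} {a b : ℝ} (hab : a ≤ b)
    (h : q.eval a * q.eval b < 0) : ∃ t ∈ Set.Ioo a b, q.IsRoot t := by
  have hcont := q.continuous.continuousOn (s := Set.Icc a b)
  rcases lt_or_gt_of_ne (left_ne_zero_of_mul h.ne) with ha | ha
  · exact intermediate_value_Ioo hab hcont ⟨ha, by nlinarith⟩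
  · exact intermediate_value_Ioo' hab hcont ⟨by nlinarith, ha⟩

theorem exists_lt_neg_one_pow_mul_eval_pos {q : ℝ[X]} (hq : 0 < q.leadingCoeff) (c : ℝ) :
    ∃ w < c, 0 < (-1) ^ q.natDegree * q.eval w := by
  have hequiv := (Asymptotics.IsEquivalent.refl (u := fun _ : ℝ => (-1 : ℝ) ^ q.natDegree)).mul
    q.isEquivalent_atBot_lead
  have hlead : ∀ᶠ t in Filter.atBot,
      0 < (-1) ^ q.natDegree * (q.leadingCoeff * t ^ q.natDegree) := by
    filter_upwards [Filter.eventually_lt_atBot 0] with t ht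
    rw [mul_left_comm, ← neg_pow]
    exact mul_pos hq (pow_pos (neg_pos.mpr ht) _)
  obtain ⟨w, hw, hwc⟩ :=
    ((hequiv.eventually_pos hlead).and (Filter.eventually_lt_atBot c)).exists
  exact ⟨w, hwc, hw⟩

theorem exists_isSortedRoots_of_alternating {q : ℝ[X]} {a : ℕ → ℝ}
    (ha : ∀ k < q.natDegree, a (k + 1) < a k)
    (hsign : ∀ k ≤ q.natDegree, 0 < (-1) ^ k * q.eval (a k)) :
    ∃ y, IsSortedRoots q y ∧ ∀ k < q.natDegree, a (k + 1) < y k ∧ y k < a k := by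
  have hq : q ≠ 0 := by
    rintro rfl
    simpa using hsign 0 (Nat.zero_le _)
  have hroot :
      ∀ k, ∃ t, k < q.natDegree → t ∈ Set.Ioo (a (k + 1)) (a k) ∧ q.IsRoot t := by
    intro k
    by_cases hk : k < q.natDegree
    · have hprod : q.eval (a (k + 1)) * q.eval (a k) < 0 := by
        have hpos := mul_pos (hsign (k + 1) hk) (hsign k hk.le)
        have hsq : ((-1 : ℝ) ^ k) ^ 2 = 1 := by
          rw [← pow_mul, mul_comm, pow_mul, neg_one_sq, one_pow]
        have hflip : (-1) ^ (k + 1) * q.eval (a (k + 1)) * ((-1) ^ k * q.eval (a k)) =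
            -(((-1 : ℝ) ^ k) ^ 2 * (q.eval (a (k + 1)) * q.eval (a k))) := by ring
        rw [hflip, hsq, one_mul] at hpos
        linarith
      obtain ⟨t, ht, hroot⟩ := exists_isRoot_mem_Ioo (ha k hk).le hprod
      exact ⟨t, fun _ => ⟨ht, hroot⟩⟩
    · exact ⟨0, fun h => absurd h hk⟩
  choose y hy using hroot
  refine ⟨y, ⟨hq, ?_, fun k hk => (hy k hk).2⟩, fun k hk => (hy k hk).1⟩
  refine (strictAntiOn_Iic_of_succ_lt (n := q.natDegree - 1) fun k hk => ?_).mono fun k hk => ?_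
  · rw [Order.succ_eq_add_one]
    exact (hy (k + 1) (by omega)).1.2.trans (hy k (by omega)).1.1
  · simp only [Set.mem_Iio, Set.mem_Iic] at hk ⊢
    omega

theorem exists_isSortedRoots_interlaces {q : ℝ[X]} {x : ℕ → ℝ} {D : ℕ} {b : ℝ}
    (hx : StrictAntiOn x (Set.Iio D)) (hxb : ∀ k < D, x k < b) (hq : 0 < q.leadingCoeff)
    (hD : D ≤ q.natDegree) (hD' : q.natDegree ≤ D + 1) (hb : 0 < q.eval b)
    (hsign : ∀ k < D, 0 < (-1) ^ (k + 1) * q.eval (x k)) :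
    ∃ y, IsSortedRoots q y ∧ Interlaces x D y q.natDegree := by
  -- The point `w` is needed only when `q.natDegree = D + 1`.
  obtain ⟨w, hw, hwsign⟩ := exists_lt_neg_one_pow_mul_eval_pos hq (min b (x (D - 1)))
  let a : ℕ → ℝ := fun
    | 0 => b
    | k + 1 => if k < D then x k else w
  have ha : ∀ k < q.natDegree, a (k + 1) < a k := by
    rintro (_ | k) hk
    · by_cases hD0 : 0 < D
      · simpa [a, hD0] using hxb 0 hD0
      · simpa [a, hD0] using (lt_min_iff.mp hw).1
    · by_cases hkD : k + 1 < D
      · simpa [a, hkD, show k < D by omega] using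
          hx (show k ∈ Set.Iio D by simp; omega) (show k + 1 ∈ Set.Iio D by simpa)
            (lt_add_one k)
      · simpa [a, hkD, show k < D by omega, show D - 1 = k by omega] using (lt_min_iff.mp hw).2
  have hsign_a : ∀ k ≤ q.natDegree, 0 < (-1) ^ k * q.eval (a k) := by
    rintro (_ | k) hk
    · simpa [a] using hb
    · by_cases hkD : k < D
      · simpa [a, hkD] using hsign k hkD
      · rw [show a (k + 1) = w from if_neg hkD, show k + 1 = q.natDegree by omega]
        exact hwsign
  obtain ⟨y, hy, hay⟩ := exists_isSortedRoots_of_alternating ha hsign_a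
  refine ⟨y, hy, fun k hk => ?_, fun k hk => ?_⟩
  · simpa [a, hk] using (hay k (by omega)).1
  · simpa [a, show k < D by omega] using (hay (k + 1) hk).2

section RootsOfZ

variable {r n : ℕ} {y z : ℕ → ℝ}

theorem exists_isSortedRoots_Z_succ_and_rootsInterlace (hy : IsSortedRoots (Z r n) y)
    (hz : IsSortedRoots (Z r (n - r)) z) (h : RootsInterlace (Z r (n - r)) (Z r n)) :
    (∃ y', IsSortedRoots (Z r (n + 1)) y') ∧ RootsInterlace (Z r n) (Z r (n + 1)) := by
  obtain ⟨y', hy', hyy'⟩ := exists_isSortedRoots_interlaces hy.strictAntiOn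
    (fun k hk => Z_isRoot_neg (hy.isRoot k hk)) (leadingCoeff_Z_pos r _)
    (natDegree_Z_le_succ r n) (natDegree_Z_succ_le r n) (eval_Z_pos r _ le_rfl) fun k hk => by
      have hs := hz.sign_eval_of_interlaces (leadingCoeff_Z_pos r _) (h z y hz hy)
        (natDegree_Z_le_sub_add r n) hk
      rw [Z_succ, eval_add, eval_mul, eval_X, (hy.isRoot k hk).eq_zero, zero_add]
      calc 0 < -y k * ((-1) ^ k * (Z r (n - r)).eval (y k)) :=
            mul_pos (neg_pos.mpr (Z_isRoot_neg (hy.isRoot k hk))) hs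
        _ = _ := by ring
  exact ⟨⟨y', hy'⟩,
    .of_interlaces hy hy' (natDegree_Z_le_succ r n) (natDegree_Z_succ_le r n) hyy'⟩

theorem Z_succ_root_succ_lt_sub_root {y' : ℕ → ℝ} (hy : IsSortedRoots (Z r n) y)
    (hz : IsSortedRoots (Z r (n - r)) z)
    (hzy : Interlaces z (Z r (n - r)).natDegree y (Z r n).natDegree)
    (hy' : IsSortedRoots (Z r (n + 1)) y')
    (hyy' : Interlaces y (Z r n).natDegree y' (Z r (n + 1)).natDegree) {k : ℕ}
    (hk : k + 1 < (Z r (n + 1)).natDegree) : y' (k + 1) < z k := by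
  have hkz : k < (Z r (n - r)).natDegree := by have := natDegree_Z_succ_le_sub r n; omega
  have hkn : k < (Z r n).natDegree := by have := natDegree_Z_succ_le r n; omega
  set t := y' (k + 1)
  have hroot := hy'.isRoot _ hk
  have hsn := hy.sign_eval_of_interlaces (leadingCoeff_Z_pos r n) hyy' (natDegree_Z_succ_le r n) hk
  have hrec : (Z r n).eval t = -t * (Z r (n - r)).eval t := by
    have := hroot.eq_zero
    rw [Z_succ, eval_add, eval_mul, eval_X] at this
    linarith
  refine hz.lt_of_sign_eval (leadingCoeff_Z_pos r _) hkz
    (fun l hl => (hyy'.succ_lt k hk).trans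
      (hzy.lt_of_lt hz.strictAntiOn (natDegree_Z_le_sub_add r n) hl hkn)) ?_
  refine pos_of_mul_pos_right ?_ (neg_pos.mpr (Z_isRoot_neg hroot)).le
  rwa [hrec, mul_left_comm] at hsn

theorem exists_isSortedRoots_Z_and_rootsInterlace (hr : 1 ≤ r) (n : ℕ) :
    (∃ y, IsSortedRoots (Z r n) y) ∧ RootsInterlace (Z r (n - r)) (Z r n) := by
  induction n using Nat.strong_induction_on with
  | _ n ih =>
  rcases n with _ | n
  · have h0 := natDegree_Z_zero r
    exact ⟨⟨0, Z_ne_zero r 0, fun k hk => by simp [h0] at hk, by simp [h0]⟩,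
      fun _ _ _ _ => ⟨by simp [h0], by simp [h0]⟩⟩
  have hsucc : ∀ m ≤ n, (∃ y', IsSortedRoots (Z r (m + 1)) y') ∧
      RootsInterlace (Z r m) (Z r (m + 1)) := fun m hm => by
    obtain ⟨y, hy⟩ := (ih m (by omega)).1
    obtain ⟨z, hz⟩ := (ih (m - r) (by omega)).1
    exact exists_isSortedRoots_Z_succ_and_rootsInterlace hy hz (ih m (by omega)).2
  refine ⟨(hsucc n le_rfl).1, fun z' y' hz' hy' => ⟨fun k hk => ?_, fun k hk => ?_⟩⟩
  · exact lt_of_rootsInterlace_succ (natDegree_Z_le_succ r) (fun m hm => (ih m hm).1)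
      (fun m hm => (hsucc m (by omega)).2) (by omega) hz' hy' hk
  · rcases lt_or_ge n r with hnr | hnr
    · have := natDegree_Z_succ_le_sub r n
      rw [Nat.sub_eq_zero_of_le hnr.le, natDegree_Z_zero] at this
      omega
    obtain ⟨y, hy⟩ := (ih n (by omega)).1
    obtain ⟨z, hz⟩ := (ih (n - r) (by omega)).1
    rw [show n + 1 - r = n - r + 1 by omega] at hz'
    exact (Z_succ_root_succ_lt_sub_root hy hz ((ih n (by omega)).2 z y hz hy) hy'
      ((hsucc n le_rfl).2 y y' hy hy') hk).trans
      (((hsucc (n - r) (by omega)).2 z z' hz hz').lt k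
        (by have := natDegree_Z_succ_le_sub r n; omega))

theorem rootsInterlace_Z_Z_succ (hr : 1 ≤ r) (n : ℕ) :
    RootsInterlace (Z r n) (Z r (n + 1)) := by
  obtain ⟨⟨y, hy⟩, h⟩ := exists_isSortedRoots_Z_and_rootsInterlace hr n
  obtain ⟨z, hz⟩ := (exists_isSortedRoots_Z_and_rootsInterlace hr (n - r)).1
  exact (exists_isSortedRoots_Z_succ_and_rootsInterlace hy hz h).2

end RootsOfZ

theorem Z_roots_mono_within_group_general (r i j : ℕ) (hr : 1 ≤ r) (hj1 : 1 ≤ j) (hj2 : j ≤ r)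
    (y y' : Fin (i + 1) → ℝ)
    (hy_anti : StrictAnti y) (hy'_anti : StrictAnti y')
    (hy_root : ∀ k, (Z r ((r + 1) * i + j)).IsRoot (y k))
    (hy'_root : ∀ k, (Z r ((r + 1) * i + j + 1)).IsRoot (y' k)) :
    ∀ k : Fin (i + 1), y k < y' k := by
  have hdeg := natDegree_Z_group r i j hj1 (by omega)
  have hdeg' := natDegree_Z_group r i (j + 1) (by omega) (by omega)
  intro k
  simpa [Fin.is_le k] using (rootsInterlace_Z_Z_succ hr _ _ _
    (isSortedRoots_of_fin (Z_ne_zero r _) hdeg hy_anti hy_root)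
    (isSortedRoots_of_fin (Z_ne_zero r _) hdeg' hy'_anti hy'_root)).lt k (by rw [hdeg]; exact k.2)

/-- Lemma 1, monotonicity of roots within a group: Fix `r ≥ 1`, `i ≥ 0` and
`1 ≤ j ≤ r`. If `y` (resp. `y'`) lists the `i+1` distinct negative real roots of
`Z_{(r+1)i+j}` (resp. `Z_{(r+1)i+j+1}`) in decreasing order, then for every `m`
the `m`-th root satisfies `y_{m,(r+1)i+j+1} > y_{m,(r+1)i+j}`. -/
theorem Z_roots_mono_within_group (r i j : ℕ) (hr : 1 ≤ r) (hj1 : 1 ≤ j) (hj2 : j ≤ r)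
    (y y' : Fin (i + 1) → ℝ)
    (hy_anti : StrictAnti y) (hy'_anti : StrictAnti y')
    (hy_neg : ∀ k, y k < 0) (hy'_neg : ∀ k, y' k < 0)
    (hy_root : ∀ k, (Z r ((r + 1) * i + j)).IsRoot (y k))
    (hy'_root : ∀ k, (Z r ((r + 1) * i + j + 1)).IsRoot (y' k))
    (hy_all : ∀ x : ℝ, (Z r ((r + 1) * i + j)).IsRoot x → ∃ k, x = y k)
    (hy'_all : ∀ x : ℝ, (Z r ((r + 1) * i + j + 1)).IsRoot x → ∃ k, x = y' k) :
    ∀ k : Fin (i + 1), y k < y' k :=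
  Z_roots_mono_within_group_general r i j hr hj1 hj2 y y' hy_anti hy'_anti hy_root hy'_root
end

section
/- For every integer r ≥ 1, every n ≥ 1, and every real y with -r^r/(r+1)^{r+1} ≤ y < 0, the consecutive partition functions satisfy the ratio bound Z_{n+1}(y)/Z_n(y) > r/(r+1) (in particular Z_n(y) > 0 so the ratio is well defined). -/
open Polynomial

private lemma coeff_vanish {r n m : ℕ} (h : (n + r) / (r + 1) + 1 ≤ m) :
    Nat.choose (n - r * (m - 1)) m = 0 := by
  apply Nat.choose_eq_zero_of_lt
  have h2 : n + r < m * (r + 1) := (Nat.div_lt_iff_lt_mul (by omega : 0 < r + 1)).mp (by omega)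
  have hm : 1 ≤ m := Nat.pos_of_ne_zero (by rintro rfl; simp at h2)
  obtain ⟨k, rfl⟩ : ∃ k, m = k + 1 := ⟨m - 1, by omega⟩
  have h3 : n + r < k * r + k + r + 1 := by
    calc n + r < (k + 1) * (r + 1) := h2
    _ = k * r + k + r + 1 := by ring
  simp only [Nat.add_sub_cancel]
  rw [Nat.mul_comm r k]
  generalize k * r = p at h3 ⊢
  omega

private lemma Z_eval_eq (r n N : ℕ) (hN : (n + r) / (r + 1) + 1 ≤ N) (y : ℝ) :
    (Z r n).eval y = ∑ m ∈ Finset.range N, ((Nat.choose (n - r * (m - 1)) m : ℝ)) * y ^ m := by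
  unfold Z
  rw [Polynomial.eval_finset_sum]
  simp only [Polynomial.eval_mul, Polynomial.eval_C, Polynomial.eval_pow, Polynomial.eval_X]
  apply Finset.sum_subset (Finset.range_subset_range.mpr hN)
  intro m _ hm
  rw [Finset.mem_range, not_lt] at hm
  rw [coeff_vanish hm]
  simp

private lemma div_bound (r n : ℕ) : (n + r) / (r + 1) + 1 ≤ n + 2 := by
  have h : (n + r) / (r + 1) < n + 2 := by
    rw [Nat.div_lt_iff_lt_mul (by omega : 0 < r + 1)]
    have e : (n + 2) * (r + 1) = n * r + n + 2 * r + 2 := by ring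
    rw [e]
    generalize n * r = p
    omega
  omega

private lemma pascal (n r m : ℕ) (h : r * m ≤ n ∨ 1 ≤ m) :
    Nat.choose (n + 1 - r * m) (m + 1)
      = Nat.choose (n - r * m) (m + 1) + Nat.choose (n - r * m) m := by
  rcases le_or_gt (r * m) n with hle | hlt
  · rw [Nat.succ_sub hle, Nat.choose_succ_succ, Nat.add_comm]
  · have hm : 1 ≤ m := by
      rcases h with h | h
      · omega
      · exact h
    have e1 : n + 1 - r * m = 0 := by omega
    have e2 : n - r * m = 0 := by omega
    rw [e1, e2, Nat.choose_eq_zero_of_lt (by omega), Nat.choose_eq_zero_of_lt hm]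

private lemma shift (n r m : ℕ) : (n - r - r * (m - 1)).choose m = (n - r * m).choose m := by
  cases m with
  | zero => simp
  | succ k =>
    rw [Nat.succ_sub_one, Nat.sub_sub]
    have e : r + r * k = r * (k + 1) := by ring
    rw [e]

private lemma Z_rec (r n : ℕ) (hrn : r ≤ n) (y : ℝ) :
    (Z r (n + 1)).eval y = (Z r n).eval y + y * (Z r (n - r)).eval y := by
  rw [Z_eval_eq r (n + 1) (n + 3) (div_bound r (n + 1)) y,
      Z_eval_eq r n (n + 3) ((div_bound r n).trans (by omega)) y,
      Z_eval_eq r (n - r) (n + 2) ((div_bound r (n - r)).trans (by omega)) y]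
  rw [Finset.sum_range_succ' (fun m => ((Nat.choose (n + 1 - r * (m - 1)) m : ℝ)) * y ^ m) (n + 2),
      Finset.sum_range_succ' (fun m => ((Nat.choose (n - r * (m - 1)) m : ℝ)) * y ^ m) (n + 2)]
  simp only [Nat.add_sub_cancel, Nat.zero_sub, Nat.mul_zero, Nat.sub_zero, Nat.choose_zero_right,
    Nat.cast_one, pow_zero, mul_one]
  rw [Finset.mul_sum]
  have key : ∀ m ∈ Finset.range (n + 2),
      ((Nat.choose (n + 1 - r * m) (m + 1) : ℝ)) * y ^ (m + 1)
        = ((Nat.choose (n - r * m) (m + 1) : ℝ)) * y ^ (m + 1)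
          + y * (((Nat.choose (n - r - r * (m - 1)) m : ℝ)) * y ^ m) := by
    intro m _
    rw [shift n r m]
    have hp := pascal n r m (by
      rcases Nat.eq_zero_or_pos m with h | h
      · left; simp [h]
      · right; exact h)
    rw [hp]
    push_cast
    ring
  rw [Finset.sum_congr rfl key, Finset.sum_add_distrib]
  ring

private lemma Z_small (r k : ℕ) (hk : k ≤ r + 1) (y : ℝ) :
    (Z r k).eval y = 1 + k * y := by
  rcases Nat.eq_zero_or_pos k with rfl | hk1
  · have h : (0 + r) / (r + 1) = 0 := Nat.div_eq_of_lt (by omega)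
    unfold Z
    rw [h]
    simp
  · have hdiv : (k + r) / (r + 1) = 1 := Nat.div_eq_of_lt_le (by omega) (by omega)
    unfold Z
    rw [hdiv]
    rw [Polynomial.eval_finset_sum]
    simp [Finset.sum_range_succ]

/-- For every integer `r ≥ 1`, every `n ≥ 1`, and every real `y` with
`-r^r/(r+1)^{r+1} ≤ y < 0`, the consecutive partition functions satisfy
`Z_{n+1}(y)/Z_n(y) > r/(r+1)` (in particular `Z_n(y) > 0`, so the ratio is well defined). -/
theorem Z_ratio_bound (r n : ℕ) (hr : 1 ≤ r) (hn : 1 ≤ n) (y : ℝ)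
    (hy0 : -(r : ℝ) ^ r / ((r : ℝ) + 1) ^ (r + 1) ≤ y) (hy1 : y < 0) :
    0 < (Z r n).eval y ∧
      (r : ℝ) / ((r : ℝ) + 1) < (Z r (n + 1)).eval y / (Z r n).eval y := by
  have hr1 : (1 : ℝ) ≤ (r : ℝ) := by exact_mod_cast hr
  have hrp : (0 : ℝ) < (r : ℝ) + 1 := by linarith
  set c : ℝ := (r : ℝ) / ((r : ℝ) + 1) with hc
  have hc0 : 0 < c := div_pos (by linarith) hrp
  have hc1 : c < 1 := (div_lt_one hrp).mpr (by linarith)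
  set B : ℝ := (r : ℝ) ^ r / ((r : ℝ) + 1) ^ (r + 1) with hBdef
  have hyB : -B ≤ y := by
    rw [hBdef, ← neg_div]
    exact hy0
  have hrr : (0 : ℝ) < (r : ℝ) ^ r := pow_pos (by linarith) r
  have hp1 : (0 : ℝ) < ((r : ℝ) + 1) ^ (r + 1) := pow_pos hrp _
  have hBpos : 0 < B := div_pos hrr hp1
  have hB : (1 - c) * c ^ r = B := by
    rw [hc, hBdef, div_pow]
    field_simp
    ring
  have hpow : 2 * (r : ℝ) ^ r ≤ ((r : ℝ) + 1) ^ r := by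
    have h0 : (0 : ℝ) < (r : ℝ) := by linarith
    have hr0 : (r : ℝ) ≠ 0 := ne_of_gt h0
    have h01 : (-2 : ℝ) ≤ 1 / (r : ℝ) := by
      have hpos : (0 : ℝ) ≤ 1 / (r : ℝ) := by positivity
      linarith
    have hb := one_add_mul_le_pow h01 r
    rw [mul_one_div, div_self hr0] at hb
    have h2 : ((r : ℝ) + 1) ^ r = (1 + 1 / (r : ℝ)) ^ r * (r : ℝ) ^ r := by
      rw [← mul_pow]
      congr 1
      field_simp
    rw [h2]
    nlinarith [hrr, hb]
  have main : ∀ m : ℕ, 0 < (Z r m).eval y ∧ c * (Z r m).eval y < (Z r (m + 1)).eval y := by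
    intro m
    induction m using Nat.strong_induction_on with
    | _ m ih =>
      rcases lt_or_ge m r with hlt | hge
      · -- base case: m < r
        rw [Z_small r m (by omega) y, Z_small r (m + 1) (by omega) y]
        have hcast : (m : ℝ) + 1 ≤ (r : ℝ) := by exact_mod_cast hlt
        have hkey : ((m : ℝ) + (r : ℝ) + 1) * B < 1 := by
          rw [hBdef, ← mul_div_assoc, div_lt_one hp1]
          have e : ((r : ℝ) + 1) ^ (r + 1) = ((r : ℝ) + 1) ^ r * ((r : ℝ) + 1) := pow_succ _ _
          nlinarith [hrr, hpow]
        have hmnn : (0 : ℝ) ≤ (m : ℝ) + (r : ℝ) + 1 := by positivity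
        have hprod : ((m : ℝ) + (r : ℝ) + 1) * (-B) ≤ ((m : ℝ) + (r : ℝ) + 1) * y :=
          mul_le_mul_of_nonneg_left hyB hmnn
        constructor
        · nlinarith [hprod, hkey, hy1, hrp]
        · rw [hc, div_mul_eq_mul_div, div_lt_iff₀ hrp]
          push_cast
          nlinarith [hprod, hkey]
      · -- inductive case: r ≤ m
        have chain : ∀ j, 1 ≤ j → j ≤ m → c ^ j * (Z r (m - j)).eval y < (Z r m).eval y := by
          intro j
          induction j with
          | zero => omega
          | succ k ihk =>
            intro _ hkm
            rcases Nat.eq_zero_or_pos k with rfl | hk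
            · have h1 := (ih (m - 1) (by omega)).2
              have e : m - 1 + 1 = m := by omega
              rw [e] at h1
              simpa using h1
            · have h1 := (ih (m - (k + 1)) (by omega)).2
              have e : m - (k + 1) + 1 = m - k := by omega
              rw [e] at h1
              have h2 := ihk (by omega) (by omega)
              calc c ^ (k + 1) * (Z r (m - (k + 1))).eval y
                  = c ^ k * (c * (Z r (m - (k + 1))).eval y) := by ring
                _ < c ^ k * (Z r (m - k)).eval y :=
                    mul_lt_mul_of_pos_left h1 (pow_pos hc0 k)
                _ < (Z r m).eval y := h2
        have hZm1 := ih (m - 1) (by omega)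
        have hZm_pos : 0 < (Z r m).eval y := by
          have h1 := chain 1 le_rfl (by omega)
          have h0 : 0 < c ^ 1 * (Z r (m - 1)).eval y := mul_pos (pow_pos hc0 1) hZm1.1
          linarith
        have hZmr_pos : 0 < (Z r (m - r)).eval y := (ih (m - r) (by omega)).1
        have hch := chain r hr hge
        have hrec := Z_rec r m hge y
        refine ⟨hZm_pos, ?_⟩
        rw [hrec]
        have h1 : (1 - c) * (c ^ r * (Z r (m - r)).eval y) < (1 - c) * (Z r m).eval y :=
          mul_lt_mul_of_pos_left hch (by linarith)
        have h2 : -B * (Z r (m - r)).eval y ≤ y * (Z r (m - r)).eval y :=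
          mul_le_mul_of_nonneg_right hyB (le_of_lt hZmr_pos)
        have h3 : (1 - c) * (c ^ r * (Z r (m - r)).eval y) = B * (Z r (m - r)).eval y := by
          rw [← hB]; ring
        nlinarith [h1, h2, h3]
  obtain ⟨h1, h2⟩ := main n
  refine ⟨h1, ?_⟩
  rw [lt_div_iff₀ h1]
  exact h2
end

section
/- For every integer r ≥ 1, every n ≥ r+1, and every real y with -r^r/(r+1)^{r+1} ≤ y < 0, one has Z_{n+1}(y) < Z_n(y); that is, the sequence n ↦ Z_n(y) is strictly decreasing on this range of y. -/
open Polynomial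

/-- Evaluation of `Z` as a plain real sum. -/
noncomputable def Sfun (r n : ℕ) (y : ℝ) : ℝ :=
  ∑ m ∈ Finset.range ((n + r) / (r + 1) + 1),
    ((Nat.choose (n - r * (m - 1)) m : ℝ)) * y ^ m

lemma Z_eval (r n : ℕ) (y : ℝ) : (Z r n).eval y = Sfun r n y := by
  simp [Z, Sfun, Polynomial.eval_finset_sum]

lemma choose_vanish (r n m : ℕ) (hm : (n + r) / (r + 1) < m) :
    (n - r * (m - 1)).choose m = 0 := by
  apply Nat.choose_eq_zero_of_lt
  have h1 : n + r < m * (r + 1) := by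
    by_contra h
    push_neg at h
    have := Nat.le_div_iff_mul_le (k := r + 1) (by omega) |>.mpr h
    omega
  have hm1 : 1 ≤ m := Nat.lt_of_le_of_lt (Nat.zero_le _) hm
  obtain ⟨k, rfl⟩ : ∃ k, m = k + 1 := ⟨m - 1, (Nat.succ_pred_eq_of_pos hm1).symm⟩
  have e : (k + 1) * (r + 1) = r * k + (k + r + 1) := by ring
  rw [e] at h1
  simp only [Nat.add_sub_cancel]
  generalize r * k = t at h1 ⊢
  omega

lemma pascal_term (r n k : ℕ) (hk : r * k ≤ n) :
    ((n + 1) - r * k).choose (k + 1)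
      = (n - r * k).choose (k + 1) + ((n - r) - r * (k - 1)).choose k := by
  cases k with
  | zero => simp
  | succ j =>
    have e1 : (n - r) - r * ((j + 1) - 1) = n - r * (j + 1) := by
      simp only [Nat.add_sub_cancel, Nat.sub_sub]
      congr 1
      ring
    rw [e1]
    have e2 : (n + 1) - r * (j + 1) = (n - r * (j + 1)) + 1 := by
      generalize r * (j + 1) = t at hk ⊢
      omega
    rw [e2, Nat.choose_succ_succ]
    exact Nat.add_comm _ _

lemma S_rec (r n : ℕ) (hrn : r ≤ n) (y : ℝ) :
    Sfun r (n + 1) y = Sfun r n y + y * Sfun r (n - r) y := by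
  set q := n / (r + 1) with hq
  have hN1 : (n + 1 + r) / (r + 1) + 1 = q + 2 := by
    have e : n + 1 + r = n + (r + 1) := by ring
    rw [e, Nat.add_div_right _ (by omega)]
  have hNr : (n - r + r) / (r + 1) + 1 = q + 1 := by
    rw [Nat.sub_add_cancel hrn]
  have hMn : (n + r) / (r + 1) + 1 ≤ q + 2 := by
    have h1 : (n + r) / (r + 1) ≤ (n + (r + 1)) / (r + 1) :=
      Nat.div_le_div_right (by omega)
    rw [Nat.add_div_right _ (by omega)] at h1
    omega
  have hpad : Sfun r n y
      = ∑ m ∈ Finset.range (q + 2), ((Nat.choose (n - r * (m - 1)) m : ℝ)) * y ^ m := by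
    rw [Sfun]
    apply Finset.sum_subset (Finset.range_subset_range.mpr hMn)
    intro m hm hm'
    simp only [Finset.mem_range, not_lt] at hm hm'
    rw [choose_vanish r n m (by omega)]
    simp
  rw [Sfun, hN1, hpad, Sfun, hNr, Finset.mul_sum]
  rw [Finset.sum_range_succ'
    (fun m => ((Nat.choose (n + 1 - r * (m - 1)) m : ℝ)) * y ^ m) (q + 1)]
  rw [Finset.sum_range_succ'
    (fun m => ((Nat.choose (n - r * (m - 1)) m : ℝ)) * y ^ m) (q + 1)]
  simp only [Nat.zero_sub, Nat.mul_zero, Nat.sub_zero, Nat.choose_zero_right,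
    Nat.cast_one, pow_zero, mul_one]
  rw [add_right_comm, ← Finset.sum_add_distrib]
  congr 1
  apply Finset.sum_congr rfl
  intro k hk
  simp only [Finset.mem_range] at hk
  have hkq : k ≤ q := by omega
  have hrk : r * k ≤ n := by
    have h1 : k * (r + 1) ≤ n := (Nat.le_div_iff_mul_le (by omega)).mp hkq
    calc r * k ≤ k * (r + 1) := by rw [mul_comm]; exact Nat.mul_le_mul_left k (by omega)
      _ ≤ n := h1
  simp only [Nat.add_sub_cancel]
  rw [pascal_term r n k hrk]
  push_cast
  ring

lemma S_small (r n : ℕ) (hn : n ≤ r + 1) (y : ℝ) :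
    Sfun r n y = 1 + n * y := by
  rcases Nat.eq_zero_or_pos n with h0 | h1
  · subst h0
    have hd : (0 + r) / (r + 1) = 0 := Nat.div_eq_of_lt (by omega)
    rw [Sfun, hd]
    simp
  · have hd : (n + r) / (r + 1) = 1 := by
      apply Nat.div_eq_of_lt_le <;> omega
    rw [Sfun, hd]
    rw [Finset.sum_range_succ, Finset.sum_range_succ, Finset.sum_range_zero]
    simp [Nat.choose_one_right]

lemma S_pos (r : ℕ) (hr : 1 ≤ r) (y : ℝ)
    (hy0 : -(r : ℝ) ^ r / ((r : ℝ) + 1) ^ (r + 1) ≤ y) (hy1 : y < 0) :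
    ∀ n, 0 < Sfun r n y ∧ ((r : ℝ) / ((r : ℝ) + 1)) * Sfun r n y ≤ Sfun r (n + 1) y := by
  have hr1 : (1 : ℝ) ≤ (r : ℝ) := by exact_mod_cast hr
  have hr0 : (0 : ℝ) < (r : ℝ) := by linarith
  have hrne : (r : ℝ) ≠ 0 := ne_of_gt hr0
  -- 2 ≤ (1 + 1/r)^r
  have h1 : (2 : ℝ) ≤ (1 + 1 / (r : ℝ)) ^ r := by
    have hnn : (0 : ℝ) ≤ 1 / (r : ℝ) := by positivity
    have h := one_add_mul_le_pow (a := 1 / (r : ℝ)) (by linarith) r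
    have e : 1 + (r : ℝ) * (1 / (r : ℝ)) = 2 := by
      rw [mul_one_div, div_self hrne]
      norm_num
    rw [e] at h
    exact h
  have h2 : 2 * (r : ℝ) ^ r ≤ ((r : ℝ) + 1) ^ r := by
    have e : ((r : ℝ) + 1) ^ r = (1 + 1 / (r : ℝ)) ^ r * (r : ℝ) ^ r := by
      rw [← mul_pow]
      congr 1
      field_simp
    rw [e]
    nlinarith [pow_pos hr0 r]
  have hBle : (r : ℝ) ^ r / ((r : ℝ) + 1) ^ (r + 1) ≤ 1 / (2 * (r : ℝ) + 1) := by
    rw [div_le_div_iff₀ (by positivity) (by positivity)]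
    have e : ((r : ℝ) + 1) ^ (r + 1) = ((r : ℝ) + 1) ^ r * ((r : ℝ) + 1) := pow_succ _ _
    rw [e, one_mul]
    nlinarith [pow_pos hr0 r]
  have hyB : -(1 / (2 * (r : ℝ) + 1)) ≤ y := by
    have := hy0
    rw [neg_div] at this
    linarith
  intro n
  induction n using Nat.strong_induction_on with
  | _ n ih =>
    rcases Nat.lt_or_ge n (r + 1) with hn | hn
    · -- small case : n ≤ r
      have hS : Sfun r n y = 1 + n * y := S_small r n (by omega) y
      have hS' : Sfun r (n + 1) y = 1 + (n + 1) * y := by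
        have := S_small r (n + 1) (by omega) y
        push_cast at this ⊢
        linarith
      have hnr : (n : ℝ) ≤ (r : ℝ) := by exact_mod_cast Nat.lt_succ_iff.mp hn
      have hn0 : (0 : ℝ) ≤ (n : ℝ) := Nat.cast_nonneg n
      have hcpos : (0 : ℝ) < 1 / (2 * (r : ℝ) + 1) := by positivity
      have hkey : 0 ≤ (n : ℝ) * (y + 1 / (2 * (r : ℝ) + 1)) :=
        mul_nonneg hn0 (by linarith)
      have hc1 : (2 * (r : ℝ) + 1) * (1 / (2 * (r : ℝ) + 1)) = 1 := by
        field_simp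
      constructor
      · rw [hS]
        nlinarith [hkey, hc1, hcpos]
      · rw [hS, hS', div_mul_eq_mul_div, div_le_iff₀ (by positivity)]
        have h5 : ((n : ℝ) + (r : ℝ) + 1) * (-y) ≤ (2 * (r : ℝ) + 1) * (1 / (2 * (r : ℝ) + 1)) := by
          apply mul_le_mul (by linarith) (by linarith) (by linarith) (by positivity)
        nlinarith [h5, hc1]
    · -- large case: n ≥ r + 1
      have hρpos : (0 : ℝ) < (r : ℝ) / ((r : ℝ) + 1) := by positivity
      have hchain : ∀ j, j ≤ r →
          ((r : ℝ) / ((r : ℝ) + 1)) ^ j * Sfun r (n - r) y ≤ Sfun r (n - r + j) y ∧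
            0 < Sfun r (n - r + j) y := by
        intro j
        induction j with
        | zero =>
          intro _
          exact ⟨by simp, (ih (n - r) (by omega)).1⟩
        | succ j ihj =>
          intro hj
          obtain ⟨ha, hb⟩ := ihj (by omega)
          have h3 := (ih (n - r + j) (by omega)).2
          constructor
          · show ((r : ℝ) / ((r : ℝ) + 1)) ^ (j + 1) * Sfun r (n - r) y ≤ Sfun r (n - r + j + 1) y
            have e : ((r : ℝ) / ((r : ℝ) + 1)) ^ (j + 1) * Sfun r (n - r) y
                = ((r : ℝ) / ((r : ℝ) + 1)) * (((r : ℝ) / ((r : ℝ) + 1)) ^ j * Sfun r (n - r) y) := by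
              ring
            rw [e]
            calc ((r : ℝ) / ((r : ℝ) + 1)) * (((r : ℝ) / ((r : ℝ) + 1)) ^ j * Sfun r (n - r) y)
                ≤ ((r : ℝ) / ((r : ℝ) + 1)) * Sfun r (n - r + j) y :=
                  mul_le_mul_of_nonneg_left ha hρpos.le
              _ ≤ Sfun r (n - r + j + 1) y := h3
          · show 0 < Sfun r (n - r + j + 1) y
            have := mul_pos hρpos hb
            linarith [h3]
      obtain ⟨hchainr, hSnpos⟩ := hchain r le_rfl
      rw [show n - r + r = n from by omega] at hchainr hSnpos
      have hrec := S_rec r n (by omega) y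
      refine ⟨hSnpos, ?_⟩
      rw [hrec]
      have hSr := (ih (n - r) (by omega)).1
      have hρlt1 : (r : ℝ) / ((r : ℝ) + 1) < 1 := by
        rw [div_lt_one (by linarith)]
        linarith
      have hBid : (r : ℝ) ^ r / ((r : ℝ) + 1) ^ (r + 1)
          = (1 - (r : ℝ) / ((r : ℝ) + 1)) * ((r : ℝ) / ((r : ℝ) + 1)) ^ r := by
        rw [div_pow, pow_succ]
        field_simp
        ring
      have hy0' : -((1 - (r : ℝ) / ((r : ℝ) + 1)) * ((r : ℝ) / ((r : ℝ) + 1)) ^ r) ≤ y := by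
        rw [← hBid]
        have := hy0
        rw [neg_div] at this
        linarith
      set ρ : ℝ := (r : ℝ) / ((r : ℝ) + 1) with hρ
      have hh1 : 0 ≤ (1 - ρ) * (Sfun r n y - ρ ^ r * Sfun r (n - r) y) :=
        mul_nonneg (by linarith) (by linarith)
      have hh2 : 0 ≤ (y + (1 - ρ) * ρ ^ r) * Sfun r (n - r) y :=
        mul_nonneg (by linarith) hSr.le
      nlinarith [hh1, hh2]


/-- For every integer `r ≥ 1`, every `n ≥ r+1`, and every real `y` with
`-r^r/(r+1)^{r+1} ≤ y < 0`, one has `Z_{n+1}(y) < Z_n(y)`. -/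
theorem Z_strict_decrease (r n : ℕ) (hr : 1 ≤ r) (hn : r + 1 ≤ n) (y : ℝ)
    (hy0 : -(r : ℝ) ^ r / ((r : ℝ) + 1) ^ (r + 1) ≤ y) (hy1 : y < 0) :
    (Z r (n + 1)).eval y < (Z r n).eval y := by
  rw [Z_eval, Z_eval]
  have hrec := S_rec r n (by omega) y
  have hpos := (S_pos r hr y hy0 hy1 (n - r)).1
  rw [hrec]
  nlinarith [mul_pos (neg_pos.mpr hy1) hpos]
end
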